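/- Reversal identity for a single path: let P = u₀u₁…u_k be a path in G = (V, A, c), let B > 0, and let ←P = u_k…u₀ be its reversal, a path in the reversed graph ←G. Then the minimum initial charge of P equals the energetic cost of the reversed path from a full battery: b_B(P) = d_B^{←G}(←P). -/

import Mathlib

/-! Let `β` be the final charge of `←P` driven from a full battery. For `b ∈ [0, B]`, `P` is
traversable from `b` iff `←P` is traversable from `B` and `b ≥ B - β`; the least such `b` is
then `B - β = d_B(←P)`. The equivalence is proved by induction on the length, splitting off
the first arc of `P` (cost `c`), which is the last arc of `←P`. `P` is traversable from `b`
iff `c ≤ b` and its tail is traversable from `min (b - c) B`; by induction this says that the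
reversed tail is traversable, ending with some charge `β' ∈ [0, B]`, and
`B - β' ≤ min (b - c) B`. That is exactly `c ≤ β'` and `B - min (β' - c) B ≤ b`, and
`min (β' - c) B` is the final charge of `←P`. -/

open scoped Classical

/-- The clamped addition `x ⊕_B y = [x + y]₀ᴮ` on `ℝ ∪ {∞}` (modeled inside `EReal`;
inputs are never `⊥`). -/
noncomputable def eplus (B : ℝ) (x y : EReal) : EReal :=
  if x + y < 0 then 0 else if x + y ≤ (B : EReal) then x + y else ⊤

/-- `batt B b cst i` is the charge `b_i` of the battery after traversing the first `i`
arcs of a path whose `i`-th arc (0-indexed) has cost `cst i`, starting from charge `b`. -/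
noncomputable def batt (B b : ℝ) (cst : ℕ → ℝ) : ℕ → ℝ
  | 0 => b
  | i + 1 => min (batt B b cst i - cst i) B

/-- The path with arc costs `cst 0, …, cst (k-1)` is traversable from initial charge `b`. -/
def Trav (B b : ℝ) (cst : ℕ → ℝ) (k : ℕ) : Prop :=
  ∀ i, i < k → cst i ≤ batt B b cst i

/-- The energetic cost `d_{B,b}(P) = b - b_k` of a path with arc costs
`cst 0, …, cst (k-1)`, or `∞` if not traversable from initial charge `b`. -/
noncomputable def dE (B b : ℝ) (cst : ℕ → ℝ) (k : ℕ) : EReal :=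
  if Trav B b cst k then ((b - batt B b cst k : ℝ) : EReal) else ⊤

/-- `u 0, u 1, …, u k` is a path in the graph with arc relation `Arc`. -/
def IsPath {V : Type*} (Arc : V → V → Prop) (u : ℕ → V) (k : ℕ) : Prop :=
  ∀ i, i < k → Arc (u i) (u (i + 1))

/-- The energetic cost `δ_{B,b}(s,t)`: the minimum of `d_{B,b}(P)` over all `s`–`t`
paths `P` (`∞` if there is none). -/
noncomputable def deltaE {V : Type*} (Arc : V → V → Prop) (c : V → V → ℝ)
    (B b : ℝ) (s t : V) : EReal :=
  sInf { x : EReal | ∃ (u : ℕ → V) (k : ℕ), IsPath Arc u k ∧ u 0 = s ∧ u k = t ∧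
    x = dE B b (fun i => c (u i) (u (i + 1))) k }

/-- The standard distance `δ(s,t)`: the infimum of total costs of `s`–`t` paths. -/
noncomputable def distE {V : Type*} (Arc : V → V → Prop) (c : V → V → ℝ)
    (s t : V) : EReal :=
  sInf { x : EReal | ∃ (u : ℕ → V) (k : ℕ), IsPath Arc u k ∧ u 0 = s ∧ u k = t ∧
    x = ((∑ i ∈ Finset.range k, c (u i) (u (i + 1)) : ℝ) : EReal) }

/-- The graph has no negative cycles. -/
def NoNegCycles {V : Type*} (Arc : V → V → Prop) (c : V → V → ℝ) : Prop :=
  ∀ (u : ℕ → V) (k : ℕ), IsPath Arc u k → u k = u 0 → 1 ≤ k →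
    0 ≤ ∑ i ∈ Finset.range k, c (u i) (u (i + 1))

section Battery

variable {B b : ℝ} {e f : ℕ → ℝ}

lemma batt_congr {n : ℕ} (h : ∀ i < n, e i = f i) : batt B b e n = batt B b f n := by
  induction n with
  | zero => rfl
  | succ n ih => simp only [batt, ih fun i hi => h i (by omega), h n n.lt_succ_self]

lemma trav_congr {k : ℕ} (h : ∀ i < k, e i = f i) : Trav B b e k ↔ Trav B b f k :=
  forall₂_congr fun i hi => by rw [h i hi, batt_congr fun j hj => h j (hj.trans hi)]

lemma dE_congr {k : ℕ} (h : ∀ i < k, e i = f i) : dE B b e k = dE B b f k := by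
  simp only [dE, trav_congr h, batt_congr h]

lemma batt_le (hb : b ≤ B) (e : ℕ → ℝ) : ∀ n, batt B b e n ≤ B
  | 0 => hb
  | _ + 1 => min_le_right _ _

lemma batt_nonneg (hB : 0 ≤ B) (hb : 0 ≤ b) {n : ℕ} (h : Trav B b e n) :
    0 ≤ batt B b e n := by
  induction n with
  | zero => exact hb
  | succ n ih =>
    have := ih fun i hi => h i (by omega)
    exact le_min (by linarith [h n n.lt_succ_self]) hB

lemma batt_succ_eq_batt_tail (i : ℕ) :
    batt B b e (i + 1) = batt B (min (b - e 0) B) (fun j => e (j + 1)) i := by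
  induction i with
  | zero => rfl
  | succ i ih => rw [batt, ih]; rfl

lemma trav_succ_iff_head {k : ℕ} :
    Trav B b e (k + 1) ↔ e 0 ≤ b ∧ Trav B (min (b - e 0) B) (fun i => e (i + 1)) k := by
  refine ⟨fun h => ⟨h 0 k.succ_pos, fun i hi => ?_⟩, fun ⟨h0, h⟩ i hi => ?_⟩
  · simpa only [batt_succ_eq_batt_tail] using h (i + 1) (by omega)
  · cases i with
    | zero => exact h0
    | succ i => simpa only [batt_succ_eq_batt_tail] using h i (by omega)

lemma trav_succ_iff_last {k : ℕ} :
    Trav B b e (k + 1) ↔ Trav B b e k ∧ e k ≤ batt B b e k := by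
  simp only [Trav, Nat.lt_succ_iff_lt_or_eq, or_imp, forall_and, forall_eq]

theorem trav_iff_reverse (hb0 : 0 ≤ b) (hbB : b ≤ B) (k : ℕ) :
    Trav B b e k ↔
      Trav B B (fun i => e (k - 1 - i)) k ∧ B - batt B B (fun i => e (k - 1 - i)) k ≤ b := by
  induction k generalizing e b with
  | zero => simp [Trav, batt, hb0]
  | succ k ih =>
    have hrev : ∀ i < k, (fun j => e (j + 1)) (k - 1 - i) = e (k - i) :=
      fun i hi => by simp only; congr 1; omega
    rw [trav_succ_iff_head, trav_succ_iff_last, batt, Nat.add_sub_cancel, Nat.sub_self,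
      ← trav_congr hrev, ← batt_congr hrev]
    have hB : 0 ≤ B := hb0.trans hbB
    beta_reduce
    set β := batt B B (fun i => e (k - 1 - i + 1)) k
    have hβB : β ≤ B := batt_le le_rfl _ k
    constructor
    · rintro ⟨he0, htail⟩
      obtain ⟨hT, hβ⟩ : Trav B B _ k ∧ B - β ≤ min (b - e 0) B :=
        (ih (le_min (by linarith) hB) (min_le_right _ _)).1 htail
      have hβ' := hβ.trans (min_le_left _ _)
      have hmin : B - b ≤ min (β - e 0) B := le_min (by linarith) (by linarith)
      exact ⟨⟨hT, by linarith⟩, by linarith⟩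
    · rintro ⟨⟨hT, he0β⟩, hmin⟩
      have hβ0 := batt_nonneg hB hB hT
      have hβb : B - β + e 0 ≤ b := by linarith [min_le_left (β - e 0) B]
      exact ⟨by linarith, (ih (le_min (by linarith) hB) (min_le_right _ _)).2
        ⟨hT, le_min (by linarith) (by linarith)⟩⟩

theorem sInf_initial_charges_eq_dE_reverse (hB : 0 ≤ B) (k : ℕ) :
    sInf {x : EReal | ∃ b : ℝ, 0 ≤ b ∧ b ≤ B ∧ Trav B b e k ∧ x = (b : EReal)} =
      dE B B (fun i => e (k - 1 - i)) k := by
  set r := fun i => e (k - 1 - i)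
  by_cases hT : Trav B B r k
  · have h0 : 0 ≤ B - batt B B r k := sub_nonneg.2 (batt_le le_rfl r k)
    have h1 : B - batt B B r k ≤ B := by linarith [batt_nonneg hB hB hT]
    rw [dE, if_pos hT]
    refine le_antisymm
      (sInf_le ⟨_, h0, h1, (trav_iff_reverse h0 h1 k).2 ⟨hT, le_rfl⟩, rfl⟩) (le_sInf ?_)
    rintro _ ⟨b, hb0, hbB, hb, rfl⟩
    exact EReal.coe_le_coe_iff.2 ((trav_iff_reverse hb0 hbB k).1 hb).2
  · rw [dE, if_neg hT, sInf_eq_top]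
    rintro _ ⟨b, hb0, hbB, hb, rfl⟩
    exact absurd ((trav_iff_reverse hb0 hbB k).1 hb).1 hT

end Battery

lemma IsPath.reverse {V : Type*} {Arc : V → V → Prop} {u : ℕ → V} {k : ℕ}
    (hP : IsPath Arc u k) : IsPath (fun x y => Arc y x) (fun i => u (k - i)) k :=
  fun i hi => by
    simpa only [show k - (i + 1) + 1 = k - i by omega] using hP (k - (i + 1)) (by omega)

theorem min_initial_charge_eq_reverse_cost_general {V : Type*}
    (Arc : V → V → Prop) (c : V → V → ℝ) (B : ℝ) (hB : 0 < B)
    (u : ℕ → V) (k : ℕ) (hP : IsPath Arc u k) :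
    IsPath (fun x y => Arc y x) (fun i => u (k - i)) k ∧
    sInf { x : EReal | ∃ b : ℝ, 0 ≤ b ∧ b ≤ B ∧
        Trav B b (fun i => c (u i) (u (i + 1))) k ∧ x = ((b : ℝ) : EReal) } =
      dE B B (fun i => c (u (k - (i + 1))) (u (k - i))) k := by
  refine ⟨hP.reverse, (sInf_initial_charges_eq_dE_reverse hB.le k).trans (dE_congr ?_)⟩
  intro i hi
  simp only [show k - 1 - i = k - (i + 1) by omega, show k - (i + 1) + 1 = k - i by omega]

/-- reversal identity for a single path: the reversal `←P = u_k…u₀` of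
a path `P = u₀…u_k` in `G` is a path in the reversed graph `←G`, and the minimum
initial charge of `P` equals the energetic cost of `←P` in `←G` from a full battery:
`b_B(P) = d_B^{←G}(←P)`. -/
theorem min_initial_charge_eq_reverse_cost {V : Type*} [Fintype V]
    (Arc : V → V → Prop) (c : V → V → ℝ) (B : ℝ) (hB : 0 < B)
    (u : ℕ → V) (k : ℕ) (hP : IsPath Arc u k) :
    IsPath (fun x y => Arc y x) (fun i => u (k - i)) k ∧
    sInf { x : EReal | ∃ b : ℝ, 0 ≤ b ∧ b ≤ B ∧
        Trav B b (fun i => c (u i) (u (i + 1))) k ∧ x = ((b : ℝ) : EReal) } =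
      dE B B (fun i => c (u (k - (i + 1))) (u (k - i))) k :=
  min_initial_charge_eq_reverse_cost_general Arc c B hB u k hP
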